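/- Let p be an odd prime, γ a fixed topological generator of 1+pℤ_p, A, N ∈ ℤ_p, n ≥ 1, and let ξ be a primitive p^n-th root of unity. Suppose φ ∈ ℤ_p[[X,Y]] (with coefficients in ℤ_p) is divisible in ℤ_p[ξ][[X,Y]] by γ^A(1+X)^N − ξ(1+Y). Then for every primitive p^n-th root of unity ξ', φ is divisible in ℤ_p[ξ][[X,Y]] by γ^A(1+X)^N − ξ'(1+Y). -/

import Mathlib

open scoped Classical

noncomputable section

/-- `γ^s` for `s ∈ ℤ_p`, defined by the binomial series `∑_k C(s,k) (γ-1)^k`. -/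
noncomputable def gpow (p : ℕ) [Fact p.Prime] (γ : ℤ_[p]) (s : ℤ_[p]) : ℤ_[p] :=
  ∑' k : ℕ, Ring.choose s k * (γ - 1) ^ k

/-- `γ` is a topological generator of the group `1 + pℤ_p`:  the closure of the set of
powers of `γ` is all of `1 + pℤ_p`. -/
def IsTopGen (p : ℕ) [Fact p.Prime] (γ : ℤ_[p]) : Prop :=
  closure (Set.range fun n : ℕ => γ ^ n) = {x : ℤ_[p] | ∃ y : ℤ_[p], x = 1 + p * y}

variable (p : ℕ) [Fact p.Prime]

variable (Ω : Type*) [NormedField Ω] [NormedAlgebra ℚ_[p] Ω] [IsUltrametricDist Ω]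
  [Algebra ℤ_[p] Ω] [IsScalarTower ℤ_[p] ℚ_[p] Ω]

/-- The two-variable power series `(1 + X_i)^N = ∑_k C(N,k) X_i^k` for `N ∈ ℤ_p`,
with coefficients in a `ℤ_p`-algebra `R`. -/
noncomputable def binomSer (R : Type*) [CommRing R] [Algebra ℤ_[p] R] (i : Fin 2)
    (N : ℤ_[p]) : MvPowerSeries (Fin 2) R :=
  fun d => if Finsupp.single i (d i) = d then algebraMap ℤ_[p] R (Ring.choose N (d i)) else 0

/-!
A `ℤ_p`-algebra endomorphism `τ` of `ℤ_p[ξ]` fixes `φ`, `γ^A` and `(1+X)^N`, so applying it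
coefficientwise to a factorisation of `φ` by `γ^A(1+X)^N − ξ(1+Y)` yields a factorisation by
`γ^A(1+X)^N − τ(ξ)(1+Y)`. An endomorphism with `τ(ξ) = ξ'` exists because `Φ_{p^n}` is
irreducible over `ℚ_p` (it is Eisenstein at `p` after `X ↦ X + 1`): thus `ξ'` is a
`ℚ_p`-conjugate of `ξ`, a conjugation of `Ω` sends `ξ` to `ξ'`, and it maps
`ℤ_p[ξ]` into `ℤ_p[ξ'] ⊆ ℤ_p[ξ]`.
-/

open Polynomial

theorem Polynomial.IsEisensteinAt.map {R S : Type*} [CommRing R] [CommRing S] {f : R[X]}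
    {P : Ideal R} {Q : Ideal S} (hf : f.IsEisensteinAt P) (φ : R →+* S)
    (hQ : Q.comap φ = P) (hQ2 : (Q ^ 2).comap φ ≤ P ^ 2) : (f.map φ).IsEisensteinAt Q := by
  have hlead : φ f.leadingCoeff ∉ Q := fun h => hf.leading (hQ ▸ h)
  have hdeg : (f.map φ).natDegree = f.natDegree :=
    natDegree_map_of_leadingCoeff_ne_zero φ fun h => hlead (h ▸ Q.zero_mem)
  refine ⟨?_, fun {i} hi => ?_, ?_⟩
  · rwa [leadingCoeff_map_of_leadingCoeff_ne_zero φ fun h => hlead (h ▸ Q.zero_mem)]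
  · rw [coeff_map, ← Ideal.mem_comap, hQ]
    exact hf.mem (hdeg ▸ hi)
  · rw [coeff_map]
    exact fun h => hf.notMem (hQ2 h)

variable {p}

theorem PadicInt.comap_intCast_span_pow (k : ℕ) :
    (Ideal.span {(p : ℤ_[p]) ^ k}).comap (Int.castRingHom ℤ_[p]) = Ideal.span {(p : ℤ) ^ k} := by
  ext m
  rw [Ideal.mem_comap, ← PadicInt.norm_le_pow_iff_mem_span_pow, eq_intCast,
    PadicInt.norm_int_le_pow_iff_dvd, Ideal.mem_span_singleton]

variable (p)

theorem cyclotomic_prime_pow_irreducible_padic (n : ℕ) :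
    Irreducible (cyclotomic (p ^ n) ℚ_[p]) := by
  obtain _ | m := n
  · simpa using irreducible_X_sub_C (1 : ℚ_[p])
  have hprime : Prime (p : ℤ_[p]) := PadicInt.prime_p
  set g := (cyclotomic (p ^ (m + 1)) ℤ_[p]).comp (X + C 1)
  have hmonic : g.Monic :=
    (cyclotomic.monic _ _).comp (monic_X_add_C 1) (by rw [natDegree_X_add_C]; exact one_ne_zero)
  have hEis : g.IsEisensteinAt (Ideal.span {(p : ℤ_[p])}) := by
    have hZ := (cyclotomic_prime_pow_comp_X_add_one_isEisensteinAt p m).map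
      (Int.castRingHom ℤ_[p]) (Q := Ideal.span {(p : ℤ_[p])})
      (by simpa using PadicInt.comap_intCast_span_pow 1)
      (by simp [Ideal.span_singleton_pow, PadicInt.comap_intCast_span_pow])
    simpa [g, Polynomial.map_comp, map_cyclotomic] using hZ
  have hdeg : 0 < g.natDegree := by
    rw [natDegree_comp, natDegree_X_add_C, mul_one, natDegree_cyclotomic]
    exact Nat.totient_pos.2 (pow_pos (Fact.out : p.Prime).pos _)
  have hg : Irreducible g :=
    hEis.irreducible ((Ideal.span_singleton_prime hprime.ne_zero).2 hprime) hmonic.isPrimitive hdeg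
  have hZp : Irreducible (cyclotomic (p ^ (m + 1)) ℤ_[p]) := by
    rwa [← MulEquiv.irreducible_iff (algEquivAevalXAddC (1 : ℤ_[p])), algEquivAevalXAddC_apply,
      ← comp_eq_aeval]
  simpa using (cyclotomic.monic _ ℤ_[p]).irreducible_iff_irreducible_map_fraction_map
    (K := ℚ_[p]) |>.1 hZp

theorem IsPrimitiveRoot.minpoly_padic_eq_cyclotomic {K : Type*} [Field K] [Algebra ℚ_[p] K]
    {ζ : K} {n : ℕ} (hζ : IsPrimitiveRoot ζ (p ^ n)) :
    minpoly ℚ_[p] ζ = cyclotomic (p ^ n) ℚ_[p] :=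
  (hζ.minpoly_eq_cyclotomic_of_irreducible (cyclotomic_prime_pow_irreducible_padic p n)).symm

theorem Algebra.exists_algHom_adjoin_singleton_eq {R K L : Type*} [CommRing R] [Field K]
    [Field L] [Algebra R K] [Algebra K L] [Algebra R L] [IsScalarTower R K L] [IsAlgClosed L]
    [Algebra.IsAlgebraic K L] {x : L} (y : Algebra.adjoin R {x})
    (hy : aeval (y : L) (minpoly K x) = 0) :
    ∃ τ : Algebra.adjoin R {x} →ₐ[R] Algebra.adjoin R {x},
      τ ⟨x, Algebra.self_mem_adjoin_singleton R x⟩ = y := by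
  obtain ⟨σ, hσ⟩ : ∃ σ : L →ₐ[K] L, σ x = y :=
    IntermediateField.exists_algHom_of_splits_of_aeval
      (fun s => ⟨(Algebra.IsAlgebraic.isAlgebraic s).isIntegral, IsAlgClosed.splits _⟩) hy
  have hmaps : Algebra.adjoin R {x} ≤ (Algebra.adjoin R {x}).comap (σ.restrictScalars R) :=
    Algebra.adjoin_le (by simp [hσ])
  exact ⟨((σ.restrictScalars R).comp (Algebra.adjoin R {x}).val).codRestrict _
    (fun z => hmaps z.2), Subtype.ext hσ⟩

theorem MvPowerSeries.map_map_algebraMap {σ R S T : Type*} [CommSemiring R] [CommSemiring S]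
    [CommSemiring T] [Algebra R S] [Algebra R T] (τ : S →ₐ[R] T) (f : MvPowerSeries σ R) :
    map (τ : S →+* T) (map (algebraMap R S) f) = map (algebraMap R T) f := by
  rw [map_map, τ.comp_algebraMap]

theorem map_binomSer {S T : Type*} [CommRing S] [CommRing T] [Algebra ℤ_[p] S] [Algebra ℤ_[p] T]
    (τ : S →ₐ[ℤ_[p]] T) (i : Fin 2) (N : ℤ_[p]) :
    MvPowerSeries.map (τ : S →+* T) (binomSer p S i N) = binomSer p T i N := by
  ext d
  rw [MvPowerSeries.coeff_map]
  change τ (ite _ _ _) = ite _ _ _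
  split_ifs <;> simp

theorem statement13
    [IsAlgClosed Ω] [Algebra.IsAlgebraic ℚ_[p] Ω]
    (γ : ℤ_[p])
    (A N : ℤ_[p]) (n : ℕ)
    (ξ : Ω) (hξ : IsPrimitiveRoot ξ (p ^ n))
    (φ : MvPowerSeries (Fin 2) ℤ_[p])
    (hdvd : (MvPowerSeries.C (σ := Fin 2) (R := Algebra.adjoin ℤ_[p] ({ξ} : Set Ω))
          (algebraMap ℤ_[p] _ (gpow p γ A)) * binomSer p _ 0 N -
        MvPowerSeries.C (σ := Fin 2) ⟨ξ, Algebra.self_mem_adjoin_singleton ℤ_[p] ξ⟩ *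
          (1 + MvPowerSeries.X 1)) ∣
      MvPowerSeries.map (σ := Fin 2) (algebraMap ℤ_[p] (Algebra.adjoin ℤ_[p] ({ξ} : Set Ω))) φ) :
    ∀ ξ' : Algebra.adjoin ℤ_[p] ({ξ} : Set Ω), IsPrimitiveRoot (ξ' : Ω) (p ^ n) →
      (MvPowerSeries.C (σ := Fin 2) (R := Algebra.adjoin ℤ_[p] ({ξ} : Set Ω))
          (algebraMap ℤ_[p] _ (gpow p γ A)) * binomSer p _ 0 N -
        MvPowerSeries.C (σ := Fin 2) ξ' * (1 + MvPowerSeries.X 1)) ∣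
      MvPowerSeries.map (σ := Fin 2) (algebraMap ℤ_[p] (Algebra.adjoin ℤ_[p] ({ξ} : Set Ω))) φ := by
  intro ξ' hξ'
  have hconj : aeval (ξ' : Ω) (minpoly ℚ_[p] ξ) = 0 := by
    rw [hξ.minpoly_padic_eq_cyclotomic, ← hξ'.minpoly_padic_eq_cyclotomic]
    exact minpoly.aeval _ _
  obtain ⟨τ, hτ⟩ := Algebra.exists_algHom_adjoin_singleton_eq ξ' hconj
  simpa [map_binomSer, MvPowerSeries.map_map_algebraMap, hτ] using
    _root_.map_dvd (MvPowerSeries.map τ.toRingHom) hdvd
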